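/- Let f_w : ℝ^{n_w}×ℝ^{n_u}×ℝ^{n_y} → ℝ^{n_w} and g_w : ℝ^{n_w}×ℝ^{n_u} → ℝ^{n_y} define an innovation-form state-space system, and define f_x(x,u) := f_w(x,u,0), g_x(x,u) := g_w(x,u), f_z(z,x,u,e) := f_w(z+x,u,e) − f_w(x,u,0), and g_z(z,x,u) := g_w(z+x,u) − g_w(x,u). Fix sequences u : ℕ → ℝ^{n_u}, e : ℕ → ℝ^{n_y} and an initial condition w_0 ∈ ℝ^{n_w}. Let w_k be the trajectory of the innovation-form system, and let x_k, z_k be the trajectories of the separated process/noise representation with x_0 := w_0 and z_0 := 0, driven by the same u and e. Then for all k ≥ 0: (i) x_k + z_k = w_k, and (ii) g_x(x_k,u_k) + g_z(z_k,x_k,u_k) + e_k = g_w(w_k,u_k) + e_k, i.e., the separated representation reproduces the output y_k of the innovation-form system. -/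
import Mathlib


/-- **Explicit separation construction.**
Given an innovation-form system `w_{k+1} = f_w(w_k,u_k,e_k)`, `y_k = g_w(w_k,u_k) + e_k`,
define `f_x(x,u) := f_w(x,u,0)`, `g_x(x,u) := g_w(x,u)`,
`f_z(z,x,u,e) := f_w(z+x,u,e) − f_w(x,u,0)`, `g_z(z,x,u) := g_w(z+x,u) − g_w(x,u)`.
For any input sequence `u`, noise sequence `e` and initial condition `w_0`, the
trajectories of the separated process/noise representation started at `x_0 = w_0`,
`z_0 = 0` satisfy `x_k + z_k = w_k` and reproduce the output of the innovation-form
system: `g_x(x_k,u_k) + g_z(z_k,x_k,u_k) + e_k = g_w(w_k,u_k) + e_k` for all `k ≥ 0`. -/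
theorem separation_construction_reproduces_output {nw nu ny : ℕ}
    (fw : (Fin nw → ℝ) → (Fin nu → ℝ) → (Fin ny → ℝ) → (Fin nw → ℝ))
    (gw : (Fin nw → ℝ) → (Fin nu → ℝ) → (Fin ny → ℝ))
    (fx : (Fin nw → ℝ) → (Fin nu → ℝ) → (Fin nw → ℝ))
    (gx : (Fin nw → ℝ) → (Fin nu → ℝ) → (Fin ny → ℝ))
    (fz : (Fin nw → ℝ) → (Fin nw → ℝ) → (Fin nu → ℝ) → (Fin ny → ℝ) → (Fin nw → ℝ))
    (gz : (Fin nw → ℝ) → (Fin nw → ℝ) → (Fin nu → ℝ) → (Fin ny → ℝ))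
    (hfx : ∀ x u, fx x u = fw x u 0)
    (hgx : ∀ x u, gx x u = gw x u)
    (hfz : ∀ z x u e, fz z x u e = fw (z + x) u e - fw x u 0)
    (hgz : ∀ z x u, gz z x u = gw (z + x) u - gw x u)
    (u : ℕ → Fin nu → ℝ) (e : ℕ → Fin ny → ℝ) (w0 : Fin nw → ℝ)
    (w x z : ℕ → Fin nw → ℝ)
    (hw0 : w 0 = w0) (hw : ∀ k, w (k + 1) = fw (w k) (u k) (e k))
    (hx0 : x 0 = w0) (hx : ∀ k, x (k + 1) = fx (x k) (u k))
    (hz0 : z 0 = 0) (hz : ∀ k, z (k + 1) = fz (z k) (x k) (u k) (e k)) :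
    ∀ k : ℕ,
      x k + z k = w k
      ∧ gx (x k) (u k) + gz (z k) (x k) (u k) + e k = gw (w k) (u k) + e k := by
  intro k
  have key : ∀ k, x k + z k = w k := by
    intro k
    induction k with
    | zero => simp [hx0, hz0, hw0]
    | succ n ih =>
      rw [hx, hz, hw, hfx, hfz]
      have : z n + x n = w n := by rw [add_comm]; exact ih
      rw [this]; abel
  refine ⟨key k, ?_⟩
  rw [hgx, hgz]
  have : z k + x k = w k := by rw [add_comm]; exact key k
  rw [this]; abel
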